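/- arXiv:2508.19525 — 7 statements merged into one kernel-verified Lean document; each statement's English description precedes it below -/
import Mathlib

section
/- Let L ≥ 1, d ≥ 0, n = L·2^d, and v : {0,…,n−1} → ℝ. Define the left rotate-and-sum iterates v_0 = v and v_i(p) = v_{i−1}(p) + v_{i−1}((p + 2^{i−1}·L) mod n) for 1 ≤ i ≤ d. Then for every position p ∈ {0,…,n−1}, v_d(p) = Σ_{j=0}^{2^d−1} v((p + j·L) mod n). In particular the summation operator over D = 2^d length-L blocks can be evaluated with exactly d = log₂ D rotations. -/
open Finset

theorem rotateSum_iterate_eq_sum {M : Type*} [AddCommMonoid M] {n L d : ℕ}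
    (v : ℕ → M) (w : ℕ → ℕ → M) (h0 : ∀ p, w 0 p = v p)
    (hstep : ∀ i < d, ∀ p, w (i + 1) p = w i p + w i ((p + 2 ^ i * L) % n)) :
    ∀ i ≤ d, ∀ p < n, w i p = ∑ j ∈ range (2 ^ i), v ((p + j * L) % n) := by
  intro i
  induction i with
  | zero =>
    intro _ p hp
    simp [h0, Nat.mod_eq_of_lt hp]
  | succ k ih =>
    intro hk p hp
    have hq : (p + 2 ^ k * L) % n < n := Nat.mod_lt _ (Nat.zero_lt_of_lt hp)
    have shifted : w k ((p + 2 ^ k * L) % n)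
        = ∑ j ∈ range (2 ^ k), v ((p + (2 ^ k + j) * L) % n) := by
      rw [ih (by omega) _ hq]
      refine sum_congr rfl fun j _ => ?_
      rw [Nat.mod_add_mod, add_mul, add_assoc]
    rw [hstep k hk p, ih (by omega) p hp, shifted, pow_succ, mul_two, sum_range_add]

theorem stmt_1_general (L d : ℕ) (n : ℕ)
    (v : ℕ → ℝ) (w : ℕ → ℕ → ℝ)
    (h0 : ∀ p, w 0 p = v p)
    (hstep : ∀ i, 1 ≤ i → i ≤ d → ∀ p,
      w i p = w (i - 1) p + w (i - 1) ((p + 2 ^ (i - 1) * L) % n)) :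
    ∀ p < n, w d p = ∑ j ∈ Finset.range (2 ^ d), v ((p + j * L) % n) :=
  rotateSum_iterate_eq_sum v w h0 (fun i hi => hstep (i + 1) (by omega) hi) d le_rfl

/-- Left rotate-and-sum: for `n = L·2^d` and iterates
`v_0 = v`, `v_i(p) = v_{i-1}(p) + v_{i-1}((p + 2^{i-1}·L) mod n)`, the final iterate
satisfies `v_d(p) = Σ_{j<2^d} v((p + j·L) mod n)` for all positions `p < n`. -/
theorem stmt_1 (L d : ℕ) (hL : 1 ≤ L) (n : ℕ) (hn : n = L * 2 ^ d)
    (v : ℕ → ℝ) (w : ℕ → ℕ → ℝ)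
    (h0 : ∀ p, w 0 p = v p)
    (hstep : ∀ i, 1 ≤ i → i ≤ d → ∀ p,
      w i p = w (i - 1) p + w (i - 1) ((p + 2 ^ (i - 1) * L) % n)) :
    ∀ p < n, w d p = ∑ j ∈ Finset.range (2 ^ d), v ((p + j * L) % n) :=
  stmt_1_general L d n v w h0 hstep
end

section
/- Let L ≥ 1, d ≥ 0, n = L·2^d, and let v : {0,…,n−1} → ℝ satisfy v(p) = 0 for all p ≥ L. Define the right rotate-and-sum iterates w_0 = v and w_i(p) = w_{i−1}(p) + w_{i−1}((p − 2^{i−1}·L) mod n) for 1 ≤ i ≤ d. Then for every j ∈ {0,…,2^d−1} and every i ∈ {0,…,L−1}, w_d(j·L + i) = v(i); that is, the right rotate-and-sum broadcasts the first length-L block of v to every length-L block of the vector using d rotations. -/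
/-- Right rotate-and-sum broadcasts the first length-`L` block:
for `n = L·2^d`, a vector `v` vanishing on positions `≥ L`, and iterates
`w_0 = v`, `w_i(p) = w_{i-1}(p) + w_{i-1}((p − 2^{i-1}·L) mod n)` (the cyclic right
rotation `(p − t) mod n` is written `(p + n − t) % n`, valid since `t ≤ n`), the final
iterate satisfies `w_d(j·L + i) = v(i)` for every block `j < 2^d` and offset `i < L`. -/
theorem stmt_2 (L d : ℕ) (hL : 1 ≤ L) (n : ℕ) (hn : n = L * 2 ^ d)
    (v : ℕ → ℝ) (hv : ∀ p, L ≤ p → v p = 0)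
    (w : ℕ → ℕ → ℝ)
    (h0 : ∀ p, w 0 p = v p)
    (hstep : ∀ i, 1 ≤ i → i ≤ d → ∀ p,
      w i p = w (i - 1) p + w (i - 1) ((p + n - 2 ^ (i - 1) * L) % n)) :
    ∀ j < 2 ^ d, ∀ i < L, w d (j * L + i) = v i := by
  have key : ∀ k, k ≤ d →
      (∀ j < 2 ^ k, ∀ i < L, w k (j * L + i) = v i) ∧
      (∀ p, L * 2 ^ k ≤ p → p < n → w k p = 0) := by
    intro k
    induction k with
    | zero =>
      intro _
      refine ⟨?_, ?_⟩
      · intro j hj i hi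
        interval_cases j
        simp [h0]
      · intro p hp _
        rw [h0]
        exact hv p (by simpa using hp)
    | succ k ih =>
      intro hk
      have hk' : k ≤ d := Nat.le_of_succ_le hk
      obtain ⟨IH1, IH2⟩ := ih hk'
      have hcomm : L * 2 ^ k = 2 ^ k * L := Nat.mul_comm _ _
      have hstep' : ∀ p, w (k + 1) p
          = w k p + w k ((p + n - 2 ^ k * L) % n) := by
        intro p
        simpa using hstep (k + 1) (by omega) hk p
      have hpow : 2 ^ (k + 1) ≤ 2 ^ d := Nat.pow_le_pow_right (by norm_num) hk
      have hpow' : 2 ^ (k + 1) = 2 * 2 ^ k := by ring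
      have h2t : 2 * (2 ^ k * L) ≤ n := by
        rw [hn]
        calc 2 * (2 ^ k * L) = L * 2 ^ (k + 1) := by ring
        _ ≤ L * 2 ^ d := Nat.mul_le_mul_left L hpow
      have hmodge : ∀ p, 2 ^ k * L ≤ p → p < n →
          (p + n - 2 ^ k * L) % n = p - 2 ^ k * L := by
        intro p hp hpn
        have : p + n - 2 ^ k * L = (p - 2 ^ k * L) + n := by omega
        rw [this, Nat.add_mod_right, Nat.mod_eq_of_lt (by omega)]
      refine ⟨?_, ?_⟩
      · intro j hj i hi
        have hjL : j * L + i < 2 ^ (k + 1) * L := by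
          calc j * L + i < (j + 1) * L := by
                rw [Nat.add_mul, Nat.one_mul]; omega
          _ ≤ 2 ^ (k + 1) * L := Nat.mul_le_mul_right L hj
        have hpn : j * L + i < n := by
          rw [hn]
          calc j * L + i < 2 ^ (k + 1) * L := hjL
          _ ≤ 2 ^ d * L := Nat.mul_le_mul_right L hpow
          _ = L * 2 ^ d := Nat.mul_comm _ _
        rcases lt_or_ge j (2 ^ k) with hj' | hj'
        · have hplt : j * L + i < 2 ^ k * L := by
            calc j * L + i < (j + 1) * L := by
                  rw [Nat.add_mul, Nat.one_mul]; omega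
            _ ≤ 2 ^ k * L := Nat.mul_le_mul_right L hj'
          have hmod : (j * L + i + n - 2 ^ k * L) % n
              = j * L + i + n - 2 ^ k * L :=
            Nat.mod_eq_of_lt (by omega)
          rw [hstep', hmod, IH1 j hj' i hi,
            IH2 (j * L + i + n - 2 ^ k * L) (by omega) (by omega)]
          ring
        · have hpge : 2 ^ k * L ≤ j * L + i := by
            calc 2 ^ k * L ≤ j * L := Nat.mul_le_mul_right L hj'
            _ ≤ j * L + i := Nat.le_add_right _ _
          have hmod := hmodge (j * L + i) hpge hpn
          have hsub : j * L + i - 2 ^ k * L = (j - 2 ^ k) * L + i := by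
            rw [Nat.sub_mul]
            have := Nat.mul_le_mul_right L hj'
            omega
          rw [hstep', hmod, hsub, IH1 (j - 2 ^ k) (by omega) i hi,
            IH2 (j * L + i) (by omega) hpn]
          ring
      · intro p hp hpn
        have hp' : 2 ^ k * L ≤ p := by
          have : L * 2 ^ (k + 1) = 2 * (2 ^ k * L) := by ring
          omega
        have hmod := hmodge p hp' hpn
        have h1 : L * 2 ^ k ≤ p - 2 ^ k * L := by
          have : L * 2 ^ (k + 1) = 2 * (L * 2 ^ k) := by ring
          have h' : L * 2 ^ k = 2 ^ k * L := Nat.mul_comm _ _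
          omega
        rw [hstep', hmod, IH2 p (by omega) hpn,
          IH2 (p - 2 ^ k * L) h1 (by omega)]
        ring
  exact fun j hj i hi => (key d le_rfl).1 j hj i hi
end

section
/- Let L ≥ 1, d ≥ 0, D = 2^d, n = L·D, and X ∈ ℝ^{L×D}. Let v be the spatial-first packing of X, i.e., v(j·L + i) = X(i,j) for i ∈ {0,…,L−1}, j ∈ {0,…,D−1}. Define the left rotate-and-sum iterates v_0 = v and v_i(p) = v_{i−1}(p) + v_{i−1}((p + 2^{i−1}·L) mod n) for 1 ≤ i ≤ d. Then for every j ∈ {0,…,D−1} and i ∈ {0,…,L−1}, v_d(j·L + i) = Σ_{j'=0}^{D−1} X(i,j'). Hence after the rotate-and-sum, every length-L block already contains the broadcast row sums of X, so when a summation operator is fused with a following scalar operator, the masking step and the separate broadcast step can both be omitted, reducing the rotation count from 2·log₂ D to log₂ D. -/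
/-!
After `k` left rotate-and-sum steps with stride `L` on a vector of length `n`, position `p`
holds the sum of the `2^k` entries `v((p + t·L) mod n)`, `t < 2^k`. For `n = L·2^d` and
`p = j·L + i`, these entries after `d` steps are `v(((j + t) mod D)·L + i) = X(i, (j + t) mod D)`
for `t < D`, and `t ↦ (j + t) mod D` permutes `{0, …, D-1}`, so every block holds the row sums.
-/

open Finset

theorem Finset.sum_range_add_mod {M : Type*} [AddCommMonoid M] (f : ℕ → M) (j D : ℕ) :
    ∑ t ∈ range D, f ((j + t) % D) = ∑ t ∈ range D, f t := by
  conv_rhs => rw [← Nat.image_Ico_mod j D, sum_image (Nat.mod_injOn_Ico j D)]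
  rw [sum_Ico_eq_sum_range, Nat.add_sub_cancel_left]

theorem Nat.mul_add_mod_mul {L i : ℕ} (hi : i < L) (m D : ℕ) :
    (m * L + i) % (L * D) = (m % D) * L + i := by
  have hdiv : (m * L + i) / L = m := by
    rw [add_comm, Nat.add_mul_div_right _ _ (by omega), Nat.div_eq_of_lt hi, zero_add]
  rw [Nat.mod_mul, hdiv, add_comm (m * L), Nat.add_mul_mod_self_right, Nat.mod_eq_of_lt hi]
  ring

theorem rotateSum_eq_sum_range {M : Type*} [AddCommMonoid M] {n : ℕ} (hn : 0 < n) (s d : ℕ)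
    (w : ℕ → ℕ → M)
    (hstep : ∀ k < d, ∀ p, w (k + 1) p = w k p + w k ((p + 2 ^ k * s) % n)) :
    ∀ k ≤ d, ∀ p < n, w k p = ∑ t ∈ range (2 ^ k), w 0 ((p + t * s) % n) := by
  intro k
  induction k with
  | zero => intro _ p hp; simp [Nat.mod_eq_of_lt hp]
  | succ k ih =>
    intro hk p hp
    have hshift (t : ℕ) : ((p + 2 ^ k * s) % n + t * s) % n = (p + (2 ^ k + t) * s) % n := by
      rw [Nat.mod_add_mod, add_mul, add_assoc]
    have hk' : k ≤ d := k.le_succ.trans hk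
    rw [hstep k hk p, ih hk' p hp, ih hk' _ (Nat.mod_lt _ hn), pow_succ, mul_two, sum_range_add]
    simp only [hshift]

theorem stmt_3_general (L d D n : ℕ) (hD : D = 2 ^ d) (hn : n = L * D)
    (X : ℕ → ℕ → ℝ) (v : ℕ → ℝ)
    (hv : ∀ i < L, ∀ j < D, v (j * L + i) = X i j)
    (w : ℕ → ℕ → ℝ)
    (h0 : ∀ p, w 0 p = v p)
    (hstep : ∀ i, 1 ≤ i → i ≤ d → ∀ p,
      w i p = w (i - 1) p + w (i - 1) ((p + 2 ^ (i - 1) * L) % n)) :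
    ∀ j < D, ∀ i < L, w d (j * L + i) = ∑ j' ∈ Finset.range D, X i j' := by
  intro j hj i hi
  have hDpos : 0 < D := hD ▸ Nat.two_pow_pos d
  have hblock (m : ℕ) : (m * L + i) % n = (m % D) * L + i := hn ▸ Nat.mul_add_mod_mul hi m D
  have hlt : j * L + i < n := by
    rw [← Nat.mod_eq_of_lt hj, ← hblock, hn]
    exact Nat.mod_lt _ (Nat.mul_pos (Nat.zero_lt_of_lt hi) hDpos)
  have hrot := rotateSum_eq_sum_range (Nat.zero_lt_of_lt hlt) L d w
    (fun k hk p ↦ by simpa using hstep (k + 1) (by omega) hk p)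
  rw [hrot d le_rfl _ hlt, ← hD]
  calc ∑ t ∈ range D, w 0 ((j * L + i + t * L) % n)
      = ∑ t ∈ range D, X i ((j + t) % D) := by
        refine sum_congr rfl fun t _ ↦ ?_
        rw [add_right_comm, ← add_mul, hblock, h0, hv i hi _ (Nat.mod_lt _ hDpos)]
    _ = ∑ j' ∈ range D, X i j' := sum_range_add_mod _ j D

/-- For `D = 2^d`, `n = L·D`, and the spatial-first packing `v` of
`X ∈ ℝ^{L×D}` (i.e. `v(j·L + i) = X(i,j)`), the left rotate-and-sum iterates
`v_0 = v`, `v_i(p) = v_{i-1}(p) + v_{i-1}((p + 2^{i-1}·L) mod n)` satisfy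
`v_d(j·L + i) = Σ_{j'<D} X(i,j')` for every `j < D` and `i < L`: every length-`L`
block of the final iterate contains the broadcast row sums of `X`. -/
theorem stmt_3 (L d D n : ℕ) (hL : 1 ≤ L) (hD : D = 2 ^ d) (hn : n = L * D)
    (X : ℕ → ℕ → ℝ) (v : ℕ → ℝ)
    (hv : ∀ i < L, ∀ j < D, v (j * L + i) = X i j)
    (w : ℕ → ℕ → ℝ)
    (h0 : ∀ p, w 0 p = v p)
    (hstep : ∀ i, 1 ≤ i → i ≤ d → ∀ p,
      w i p = w (i - 1) p + w (i - 1) ((p + 2 ^ (i - 1) * L) % n)) :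
    ∀ j < D, ∀ i < L, w d (j * L + i) = ∑ j' ∈ Finset.range D, X i j' :=
  stmt_3_general L d D n hD hn X v hv w h0 hstep
end

section
/- (Correctness of inner rotation via mask–rotate–add.) Let L, D ≥ 1, n = L·D, v : {0,…,n−1} → ℝ, and fix a segment index r ∈ {0,…,D−1} and a shift t with 0 ≤ t < L. Let m₁ be the 0/1 indicator vector of positions p with r·L + t ≤ p < (r+1)·L, and m₂ the indicator of positions p with r·L ≤ p < r·L + t. Then for every i ∈ {0,…,L−1}: (Rot_l^t(m₁ ⊙ v))(r·L + i) + (Rot_r^{L−t}(m₂ ⊙ v))(r·L + i) = v(r·L + ((i + t) mod L)). That is, masking with m₁ and m₂, rotating the two masked vectors globally by t steps left and L−t steps right respectively, and adding, realizes the cyclic left rotation by t of the r-th length-L segment of v, in place within that segment. -/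
/-- Inner rotation via mask–rotate–add: with `n = L·D`, segment index
`r < D` and shift `0 ≤ t < L`, masking `v` by the indicators `m₁` (positions
`r·L + t ≤ p < (r+1)·L`) and `m₂` (positions `r·L ≤ p < r·L + t`), rotating the first
masked vector left by `t` and the second right by `L − t` (the cyclic right rotation
`(p − (L−t)) mod n` is written `(p + n − (L−t)) % n`), and adding, realizes the cyclic
left rotation by `t` of the `r`-th length-`L` segment of `v`, in place:
for every `i < L` the result at position `r·L + i` is `v(r·L + ((i+t) mod L))`. -/
theorem stmt_5 (L D : ℕ) (hL : 1 ≤ L) (hD : 1 ≤ D) (n : ℕ) (hn : n = L * D)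
    (v : ℕ → ℝ) (r t : ℕ) (hr : r < D) (ht : t < L)
    (m₁ m₂ : ℕ → ℝ)
    (hm₁ : ∀ p, m₁ p = if r * L + t ≤ p ∧ p < (r + 1) * L then 1 else 0)
    (hm₂ : ∀ p, m₂ p = if r * L ≤ p ∧ p < r * L + t then 1 else 0) :
    ∀ i < L,
      m₁ ((r * L + i + t) % n) * v ((r * L + i + t) % n)
        + m₂ ((r * L + i + n - (L - t)) % n) * v ((r * L + i + n - (L - t)) % n)
      = v (r * L + (i + t) % L) := by
  intro i hi
  have hrl : (r + 1) * L = r * L + L := by ring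
  have key : r * L + L ≤ n := by
    calc r * L + L = (r + 1) * L := by ring
      _ ≤ D * L := Nat.mul_le_mul_right L hr
      _ = L * D := mul_comm D L
      _ = n := hn.symm
  simp only [hm₁, hm₂, hrl]
  by_cases h : i + t < L
  · -- left-rotated part stays in segment; right-rotated part contributes 0
    have e1 : (r * L + i + t) % n = r * L + i + t := Nat.mod_eq_of_lt (by omega)
    have e2 : (i + t) % L = i + t := Nat.mod_eq_of_lt h
    by_cases h2 : L ≤ r * L + i + t
    · have e3 : (r * L + i + n - (L - t)) % n = r * L + i + t - L := by
        have : r * L + i + n - (L - t) = n + (r * L + i + t - L) := by omega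
        rw [this, Nat.add_mod_left, Nat.mod_eq_of_lt (by omega)]
      rw [e1, e2, e3, if_pos (by omega), if_neg (by omega)]
      ring
    · have e3 : (r * L + i + n - (L - t)) % n = r * L + i + n - (L - t) :=
        Nat.mod_eq_of_lt (by omega)
      rw [e1, e2, e3, if_pos (by omega), if_neg (by omega)]
      ring
  · -- wrap-around: right-rotated part carries the value, left-rotated part is 0
    have e2 : (i + t) % L = i + t - L := by
      conv_lhs => rw [show i + t = L + (i + t - L) from by omega]
      rw [Nat.add_mod_left, Nat.mod_eq_of_lt (by omega)]
    have e3 : (r * L + i + n - (L - t)) % n = r * L + i + t - L := by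
      have : r * L + i + n - (L - t) = n + (r * L + i + t - L) := by omega
      rw [this, Nat.add_mod_left, Nat.mod_eq_of_lt (by omega)]
    by_cases h2 : r * L + i + t < n
    · have e1 : (r * L + i + t) % n = r * L + i + t := Nat.mod_eq_of_lt h2
      rw [e1, e2, e3, if_neg (by omega), if_pos (by omega)]
      have hv : r * L + i + t - L = r * L + (i + t - L) := by omega
      rw [hv]; ring
    · have e1 : (r * L + i + t) % n = r * L + i + t - n := by
        conv_lhs => rw [show r * L + i + t = n + (r * L + i + t - n) from by omega]
        rw [Nat.add_mod_left, Nat.mod_eq_of_lt (by omega)]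
      rw [e1, e2, e3, if_neg (by omega), if_pos (by omega)]
      have hv : r * L + i + t - L = r * L + (i + t - L) := by omega
      rw [hv]; ring
end

section
/- (Composed correctness of BLB's three-step ciphertext–ciphertext matrix multiplication protocol with preprocessing.) Let L, D ≥ 1, A ∈ ℝ^{L×D}, B ∈ ℝ^{D×L}, and C = A·B. For each t ∈ {0,…,L−1}, define the t-th product array P_t over slots (k,i) ∈ {0,…,D−1}×{0,…,L−1} by P_t(k,i) = A(i,k)·B(k, (i + k + t) mod L); this is the slot value obtained after Step 1's preprocessing (which cyclically rotates row k of B left by k steps within the row), Step 2's simultaneous inner rotation of all rows by t steps, and the element-wise multiplication with the spatial-first packing of A. Then for every diagonal index d ∈ {0,…,L−1} and every i ∈ {0,…,L−1}: Σ_{k=0}^{D−1} P_{(d−k) mod L}(k, i) = C(i, (i+d) mod L). Hence Step 3's diagonal rotation and summation across the L product arrays correctly reconstructs every cyclic diagonal of C. -/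
/-- Composed correctness of BLB's three-step ct-ct MatMul protocol:
with `C = A·B` and product arrays `P_t(k,i) = A(i,k) · B(k, (i + k + t) mod L)`
(the slot values after preprocessing, simultaneous inner rotation by `t`, and
element-wise multiplication with the spatial-first packing of `A`), Step 3's diagonal
rotation and summation reconstructs every cyclic diagonal of `C`:
`Σ_{k<D} P_{(d−k) mod L}(k,i) = C(i, (i+d) mod L)` for all `d < L`, `i < L`.
(The index `(d − k) mod L` is written `(d + L − k % L) % L`.) -/
theorem stmt_7 (L D : ℕ) (hL : 1 ≤ L) (hD : 1 ≤ D)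
    (A B C : ℕ → ℕ → ℝ)
    (hC : ∀ i j, C i j = ∑ k ∈ Finset.range D, A i k * B k j)
    (P : ℕ → ℕ → ℕ → ℝ)
    (hP : ∀ t < L, ∀ k < D, ∀ i < L, P t k i = A i k * B k ((i + k + t) % L)) :
    ∀ d < L, ∀ i < L,
      ∑ k ∈ Finset.range D, P ((d + L - k % L) % L) k i = C i ((i + d) % L) := by
  intro d hd i hi
  rw [hC]
  apply Finset.sum_congr rfl
  intro k hk
  have hL0 : 0 < L := hL
  rw [hP _ (Nat.mod_lt _ hL0) k (Finset.mem_range.mp hk) i hi]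
  congr 2
  have hr : k % L < L := Nat.mod_lt _ hL0
  have c1 : (d + L - k % L) % L ≡ d + L - k % L [MOD L] := Nat.mod_modEq _ _
  have c2 : k ≡ k % L [MOD L] := (Nat.mod_modEq k L).symm
  have h1 : i + k + (d + L - k % L) % L ≡ i + (k % L) + (d + L - k % L) [MOD L] :=
    ((Nat.ModEq.refl i).add c2).add c1
  have e : i + (k % L) + (d + L - k % L) = i + d + L := by omega
  have h2 : i + d + L ≡ i + d [MOD L] := Nat.add_mod_right _ _
  exact h1.trans (e ▸ h2)
end

section
/- (Correctness and failure probability of the local ring-to-field share conversion.) Let l ≥ 0, L = l + 40, let q ≥ 2 be an integer, and let m be a natural number with m < 2^l. Let x₀ be uniformly distributed on {0, …, 2^L − 1} and set x₁ = (m − x₀) mod 2^L. Then: (i) whenever x₀ > m, one has x₀ + x₁ = m + 2^L over the integers, and hence the locally converted shares over ℤ/qℤ reconstruct m, i.e., (x₀ mod q) + ((x₁ − 2^L) mod q) ≡ m (mod q); (ii) the exceptional event {x₀ ≤ m} has probability exactly (m+1)/2^L, which is at most 2^{−40}. Consequently the local ring-to-field conversion is correct with probability at least 1 − 2^{−40}.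 -/
/-- Correctness and failure probability of the local ring-to-field
share conversion. With `L = l + 40`, `m < 2^l`, uniformly random `x₀ ∈ {0,…,2^L−1}`
and `x₁ = (m − x₀) mod 2^L`:
(i) whenever `x₀ > m`, `x₀ + x₁ = m + 2^L` over the integers, so the locally converted
shares over `ℤ/qℤ` reconstruct `m`: `(x₀ mod q) + ((x₁ − 2^L) mod q) ≡ m (mod q)`;
(ii) the exceptional event `{x₀ ≤ m}` has probability (fraction of the uniform sample
space `{0,…,2^L−1}`) exactly `(m+1)/2^L`, which is at most `2^{−40}`. -/
theorem stmt_9 (l L : ℕ) (hL : L = l + 40) (q : ℕ) (hq : 2 ≤ q)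
    (m : ℕ) (hm : m < 2 ^ l)
    (x₁ : ℕ → ℕ) (hx₁ : ∀ x₀, x₁ x₀ = (((m : ℤ) - (x₀ : ℤ)) % 2 ^ L).toNat) :
    (∀ x₀ < 2 ^ L, m < x₀ →
        x₀ + x₁ x₀ = m + 2 ^ L ∧
        ((x₀ : ZMod q) + ((((x₁ x₀ : ℤ) - 2 ^ L) : ℤ) : ZMod q) = (m : ZMod q))) ∧
    ((((Finset.range (2 ^ L)).filter fun x₀ => x₀ ≤ m).card : ℝ) / 2 ^ L
        = ((m : ℝ) + 1) / 2 ^ L) ∧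
    ((m : ℝ) + 1) / 2 ^ L ≤ 2 ^ (-(40 : ℤ)) := by
  have hmL : m < 2 ^ L := lt_of_lt_of_le hm (by
    apply Nat.pow_le_pow_right (by norm_num); omega)
  refine ⟨?_, ?_, ?_⟩
  · intro x₀ hx₀ hmx
    have hpow : (0:ℤ) < 2 ^ L := by positivity
    have hb : (x₀:ℤ) < 2 ^ L := by exact_mod_cast hx₀
    have hb2 : (m:ℤ) < (x₀:ℤ) := by exact_mod_cast hmx
    have key : (((m : ℤ) - x₀) % 2 ^ L) = (m : ℤ) - x₀ + 2 ^ L := by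
      have h1 : ((m : ℤ) - x₀ + 2 ^ L) % 2 ^ L = (m : ℤ) - x₀ + 2 ^ L :=
        Int.emod_eq_of_lt (by omega) (by omega)
      calc ((m : ℤ) - x₀) % 2 ^ L = ((m : ℤ) - x₀ + 2 ^ L * 1) % 2 ^ L := by
            rw [Int.add_mul_emod_self_left]
        _ = (m : ℤ) - x₀ + 2 ^ L := by rw [mul_one, h1]
    have hx1 : (x₁ x₀ : ℤ) = (m : ℤ) - x₀ + 2 ^ L := by
      rw [hx₁, key, Int.toNat_of_nonneg (by omega)]
    constructor
    · have h : (x₀:ℤ) + x₁ x₀ = m + 2 ^ L := by rw [hx1]; ring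
      exact_mod_cast h
    · have h2 : ((x₁ x₀ : ℤ) - 2 ^ L) = (m : ℤ) - x₀ := by omega
      rw [h2]; push_cast; ring
  · have : (Finset.range (2 ^ L)).filter (fun x₀ => x₀ ≤ m) = Finset.range (m + 1) := by
      ext x
      simp only [Finset.mem_filter, Finset.mem_range]
      constructor
      · rintro ⟨_, h⟩; omega
      · intro h; exact ⟨by omega, by omega⟩
    rw [this, Finset.card_range]
    push_cast
    ring
  · rw [div_le_iff₀ (by positivity)]
    have h1 : (m : ℝ) + 1 ≤ 2 ^ l := by
      have : (m : ℝ) + 1 ≤ ((2 ^ l : ℕ) : ℝ) := by exact_mod_cast hm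
      simpa using this
    have h2 : (2 : ℝ) ^ (-(40 : ℤ)) * 2 ^ L = 2 ^ l := by
      rw [hL]
      rw [show ((2:ℝ) ^ (l + 40) = 2 ^ l * 2 ^ 40) from by ring]
      rw [zpow_neg]
      field_simp
    rw [h2]; exact h1
end

section
/- (Correctness of extend-then-truncate over a larger ring.) Let s ≤ L be natural numbers, let x₀, x₁ ∈ {0, …, 2^L − 1}, and let m be a natural number with x₀ + x₁ = m + 2^L over the integers. Let c = 1 if (x₀ mod 2^s) + (x₁ mod 2^s) ≥ 2^s and c = 0 otherwise. Then ⌊x₀/2^s⌋ + ⌊x₁/2^s⌋ = ⌊m/2^s⌋ + 2^{L−s} − c; consequently ⌊x₀/2^s⌋ + ⌊x₁/2^s⌋ ≡ ⌊m/2^s⌋ − c (mod 2^{L−s}), so after each party locally right-shifts its share by s bits, the shares reconstruct ⌊m/2^s⌋ modulo 2^{L−s} up to a one-bit rounding error c ∈ {0,1}. -/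
/-! Right-shifting by `s` bits is division by `2^s`, and `⌊(a + b)/2^s⌋ = ⌊a/2^s⌋ + ⌊b/2^s⌋ + c`
where `c` is the carry out of the low `s` bits. Applied to `x₀ + x₁ = m + 2^L`, the wrap term
`2^L` is a multiple of `2^s` and shifts down exactly to `2^{L-s}`, which vanishes modulo `2^{L-s}`. -/

theorem Nat.add_pow_div_pow_of_le {b s L : ℕ} (hb : 0 < b) (hsL : s ≤ L) (m : ℕ) :
    (m + b ^ L) / b ^ s = m / b ^ s + b ^ (L - s) := by
  rw [← pow_sub_mul_pow b hsL, Nat.add_mul_div_right _ _ (pow_pos hb s)]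

theorem Int.modEq_sub_of_add_eq_add {a c d n : ℤ} (h : a + c = d + n) : a ≡ d - c [ZMOD n] := by
  have : a = d - c + n := by linarith
  exact this ▸ Int.add_modEq_right

theorem stmt_12_general (s L : ℕ) (hsL : s ≤ L) (x₀ x₁ m : ℕ)
    (hwrap : x₀ + x₁ = m + 2 ^ L)
    (c : ℕ) (hc : c = if 2 ^ s ≤ x₀ % 2 ^ s + x₁ % 2 ^ s then 1 else 0) :
    x₀ / 2 ^ s + x₁ / 2 ^ s = m / 2 ^ s + 2 ^ (L - s) - c ∧
    ((x₀ / 2 ^ s + x₁ / 2 ^ s : ℤ) ≡ (m / 2 ^ s : ℕ) - (c : ℤ) [ZMOD (2 ^ (L - s))]) := by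
  have key : x₀ / 2 ^ s + x₁ / 2 ^ s + c = m / 2 ^ s + 2 ^ (L - s) := by
    rw [hc, ← Nat.add_div (Nat.two_pow_pos s), hwrap, Nat.add_pow_div_pow_of_le two_pos hsL]
  exact ⟨Nat.eq_sub_of_add_eq key, Int.modEq_sub_of_add_eq_add (by exact_mod_cast key)⟩

/-- Correctness of extend-then-truncate over a larger ring:
for `s ≤ L`, shares `x₀, x₁ < 2^L` with `x₀ + x₁ = m + 2^L` over the integers, and the
carry `c = 1` iff `(x₀ mod 2^s) + (x₁ mod 2^s) ≥ 2^s` (else `0`), we have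
`⌊x₀/2^s⌋ + ⌊x₁/2^s⌋ = ⌊m/2^s⌋ + 2^{L−s} − c`, hence
`⌊x₀/2^s⌋ + ⌊x₁/2^s⌋ ≡ ⌊m/2^s⌋ − c (mod 2^{L−s})`: the locally right-shifted shares
reconstruct `⌊m/2^s⌋` modulo `2^{L−s}` up to a one-bit rounding error `c ∈ {0,1}`. -/
theorem stmt_12 (s L : ℕ) (hsL : s ≤ L) (x₀ x₁ m : ℕ)
    (hx₀ : x₀ < 2 ^ L) (hx₁ : x₁ < 2 ^ L)
    (hwrap : x₀ + x₁ = m + 2 ^ L)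
    (c : ℕ) (hc : c = if 2 ^ s ≤ x₀ % 2 ^ s + x₁ % 2 ^ s then 1 else 0) :
    x₀ / 2 ^ s + x₁ / 2 ^ s = m / 2 ^ s + 2 ^ (L - s) - c ∧
    ((x₀ / 2 ^ s + x₁ / 2 ^ s : ℤ) ≡ (m / 2 ^ s : ℕ) - (c : ℤ) [ZMOD (2 ^ (L - s))]) :=
  stmt_12_general s L hsL x₀ x₁ m hwrap c hc
end
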